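/- (Extremal stop-loss transforms) Let 𝓛₀₁ be the set of all Borel probability measures on ℝ with mean 0 and variance 1. For every x∈ℝ, sup_{μ∈𝓛₀₁} ∫_x^∞ (1 − F_μ(y)) dy = (√(x²+1) − x)/2 and inf_{μ∈𝓛₀₁} ∫_x^∞ (1 − F_μ(y)) dy = max(−x, 0). -/

import Mathlib

open MeasureTheory Set

/-- The set of all Borel probability measures on ℝ with mean 0 and variance 1. -/
def stdMeasures : Set (Measure ℝ) :=
  {μ | IsProbabilityMeasure μ ∧ (∫ x, x ∂μ) = 0 ∧ (∫ x, x ^ 2 ∂μ) = 1}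

/-- The distribution function of a measure: `F_μ(x) = μ((-∞, x])`. -/
noncomputable def distFun (μ : Measure ℝ) (x : ℝ) : ℝ := (μ (Iic x)).toReal

/-- The stop-loss transform of `μ` at `x`: `Π_μ(x) = ∫_x^∞ (1 − F_μ(y)) dy`. -/
noncomputable def stopLoss (μ : Measure ℝ) (x : ℝ) : ℝ :=
  ∫ y in Ioi x, (1 - distFun μ y)

/-!
By the layer-cake formula, `Π_μ(x) = E (X - x)⁺`. Jensen gives `(-x)⁺ ≤ E (X - x)⁺`, and the
quadratic majorant `(t - x)⁺ ≤ (t - x + c)² / (4c)` gives `E (X - x)⁺ ≤ (1 + (x - c)²) / (4c)`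
for every `c > 0`, which is minimised at `c = √(x² + 1)`. All bounds are attained or approached by
the two-point laws on `{-1/v, v}` with mean `0` and variance `1`: `v = x + √(x² + 1)` for the
supremum, `v = -1/x` for the infimum when `x < 0`, and `v → ∞` when `x ≥ 0`.
-/

lemma one_sub_distFun (μ : Measure ℝ) [IsProbabilityMeasure μ] (y : ℝ) :
    1 - distFun μ y = μ.real (Ioi y) := by
  rw [distFun, ← compl_Iic, probReal_compl_eq_one_sub measurableSet_Iic, measureReal_def]

lemma lintegral_max_sub_eq_lintegral_measure_Ioi (μ : Measure ℝ) (x : ℝ) :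
    ∫⁻ t, ENNReal.ofReal (max (t - x) 0) ∂μ = ∫⁻ y in Ioi x, μ (Ioi y) := by
  have hlevel : ∀ s ∈ Ioi (0 : ℝ), μ {t | s < max (t - x) 0} = μ (Ioi (x + s)) := by
    intro s (hs : 0 < s)
    congr 1
    ext t
    simp only [Set.mem_ofPred_eq, mem_Ioi, lt_max_iff, hs.not_gt, or_false]
    constructor <;> intro h <;> linarith
  calc ∫⁻ t, ENNReal.ofReal (max (t - x) 0) ∂μ = ∫⁻ s in Ioi 0, μ {t | s < max (t - x) 0} :=
        lintegral_eq_lintegral_meas_lt μ (ae_of_all _ fun t => le_max_right _ _) (by fun_prop)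
    _ = ∫⁻ s in Ioi 0, μ (Ioi (x + s)) := setLIntegral_congr_fun measurableSet_Ioi hlevel
    _ = ∫⁻ y in (x + ·) '' Ioi 0, μ (Ioi y) :=
        (measurePreserving_add_left volume x).setLIntegral_comp_emb
          (measurableEmbedding_addLeft x) (fun y => μ (Ioi y)) _
    _ = ∫⁻ y in Ioi x, μ (Ioi y) := by rw [image_const_add_Ioi, add_zero]

lemma stopLoss_eq_integral_max_sub (μ : Measure ℝ) [IsProbabilityMeasure μ] (x : ℝ) :
    stopLoss μ x = ∫ t, max (t - x) 0 ∂μ := by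
  have hanti : Antitone fun y => μ (Ioi y) := fun a b hab => measure_mono (Ioi_subset_Ioi hab)
  calc stopLoss μ x = (∫⁻ y in Ioi x, μ (Ioi y)).toReal := by
        simp_rw [stopLoss, one_sub_distFun, measureReal_def]
        exact integral_toReal hanti.measurable.aemeasurable
          (ae_of_all _ fun y => measure_lt_top μ _)
    _ = ∫ t, max (t - x) 0 ∂μ := by
        rw [← lintegral_max_sub_eq_lintegral_measure_Ioi]
        exact (integral_eq_lintegral_of_nonneg_ae (ae_of_all _ fun t => le_max_right _ _)
          (by fun_prop)).symm

section Moments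

variable {μ : Measure ℝ}

lemma integrable_sq_of_mem_stdMeasures (hμ : μ ∈ stdMeasures) :
    Integrable (fun t : ℝ => t ^ 2) μ := by
  by_contra h
  have hvar := hμ.2.2
  rw [integral_undef h] at hvar
  exact zero_ne_one hvar

lemma memLp_two_of_mem_stdMeasures (hμ : μ ∈ stdMeasures) : MemLp (fun t : ℝ => t) 2 μ :=
  (memLp_two_iff_integrable_sq aestronglyMeasurable_id).2 (integrable_sq_of_mem_stdMeasures hμ)

lemma integrable_id_of_mem_stdMeasures (hμ : μ ∈ stdMeasures) :
    Integrable (fun t : ℝ => t) μ :=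
  have := hμ.1
  (memLp_two_of_mem_stdMeasures hμ).integrable one_le_two

lemma integrable_sub_sq_of_mem_stdMeasures (hμ : μ ∈ stdMeasures) (a : ℝ) :
    Integrable (fun t : ℝ => (t - a) ^ 2) μ :=
  have := hμ.1
  (memLp_two_iff_integrable_sq (by fun_prop)).1
    ((memLp_two_of_mem_stdMeasures hμ).sub (memLp_const a))

lemma integral_sub_of_mem_stdMeasures (hμ : μ ∈ stdMeasures) (a : ℝ) :
    ∫ t, (t - a) ∂μ = -a := by
  have := hμ.1
  rw [integral_sub (integrable_id_of_mem_stdMeasures hμ) (integrable_const a), hμ.2.1,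
    integral_const, probReal_univ, one_smul, zero_sub]

lemma integral_sub_sq_of_mem_stdMeasures (hμ : μ ∈ stdMeasures) (a : ℝ) :
    ∫ t, (t - a) ^ 2 ∂μ = 1 + a ^ 2 := by
  have := hμ.1
  have hlin : Integrable (fun t : ℝ => 2 * a * t) μ :=
    (integrable_id_of_mem_stdMeasures hμ).const_mul (2 * a)
  have hquad : Integrable (fun t : ℝ => t ^ 2 - 2 * a * t) μ :=
    (integrable_sq_of_mem_stdMeasures hμ).sub hlin
  have hexpand : (fun t : ℝ => (t - a) ^ 2) = fun t => (t ^ 2 - 2 * a * t) + a ^ 2 := by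
    funext t; ring
  rw [hexpand, integral_add hquad (integrable_const _),
    integral_sub (integrable_sq_of_mem_stdMeasures hμ) hlin, integral_const_mul, hμ.2.1, hμ.2.2,
    integral_const, probReal_univ, one_smul]
  ring

end Moments

lemma max_sub_zero_le_sq_div {t x c : ℝ} (hc : 0 < c) :
    max (t - x) 0 ≤ (t - (x - c)) ^ 2 / (4 * c) := by
  refine max_le ?_ (by positivity)
  rw [le_div_iff₀ (by positivity)]
  nlinarith [sq_nonneg (t - x - c)]

lemma stopLoss_le_of_pos {μ : Measure ℝ} (hμ : μ ∈ stdMeasures) (x : ℝ) {c : ℝ} (hc : 0 < c) :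
    stopLoss μ x ≤ (1 + (x - c) ^ 2) / (4 * c) := by
  have := hμ.1
  have hlin := integrable_id_of_mem_stdMeasures hμ
  rw [stopLoss_eq_integral_max_sub, ← integral_sub_sq_of_mem_stdMeasures hμ, ← integral_div]
  exact integral_mono (hlin.sub (integrable_const x)).pos_part
    ((integrable_sub_sq_of_mem_stdMeasures hμ _).div_const _) fun t => max_sub_zero_le_sq_div hc

lemma add_sqrt_sq_add_one_pos (x : ℝ) : 0 < x + √(x ^ 2 + 1) := by
  have : |x| < √(x ^ 2 + 1) := Real.lt_sqrt (abs_nonneg x) |>.2 (by rw [sq_abs]; linarith)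
  linarith [neg_abs_le x]

lemma stopLoss_le_of_mem_stdMeasures {μ : Measure ℝ} (hμ : μ ∈ stdMeasures) (x : ℝ) :
    stopLoss μ x ≤ (√(x ^ 2 + 1) - x) / 2 := by
  set s := √(x ^ 2 + 1)
  have hs2 : s ^ 2 = x ^ 2 + 1 := Real.sq_sqrt (by positivity)
  have hs : 0 < s := by positivity
  calc stopLoss μ x ≤ (1 + (x - s) ^ 2) / (4 * s) := stopLoss_le_of_pos hμ x hs
    _ = (s - x) / 2 := by
        field_simp
        linear_combination -2 * hs2

lemma max_neg_zero_le_stopLoss {μ : Measure ℝ} (hμ : μ ∈ stdMeasures) (x : ℝ) :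
    max (-x) 0 ≤ stopLoss μ x := by
  have := hμ.1
  have hsub := (integrable_id_of_mem_stdMeasures hμ).sub (integrable_const x)
  rw [stopLoss_eq_integral_max_sub]
  refine max_le ?_ (integral_nonneg fun t => le_max_right _ _)
  rw [← integral_sub_of_mem_stdMeasures hμ]
  exact integral_mono hsub hsub.pos_part fun t => le_max_left _ _

noncomputable def twoPoint (v : ℝ) : Measure ℝ :=
  ENNReal.ofReal (v ^ 2 / (1 + v ^ 2)) • Measure.dirac (-v⁻¹)
    + ENNReal.ofReal (1 / (1 + v ^ 2)) • Measure.dirac v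

lemma integral_twoPoint (v : ℝ) (f : ℝ → ℝ) :
    ∫ t, f t ∂twoPoint v = v ^ 2 / (1 + v ^ 2) * f (-v⁻¹) + 1 / (1 + v ^ 2) * f v := by
  have hf : ∀ a, Integrable f (Measure.dirac a) := fun a =>
    (integrable_const (f a)).congr (ae_eq_dirac f).symm
  rw [twoPoint, integral_add_measure ((hf _).smul_measure ENNReal.ofReal_ne_top)
      ((hf _).smul_measure ENNReal.ofReal_ne_top), integral_smul_measure, integral_smul_measure,
    integral_dirac, integral_dirac, ENNReal.toReal_ofReal (by positivity),
    ENNReal.toReal_ofReal (by positivity), smul_eq_mul, smul_eq_mul]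

instance (v : ℝ) : IsProbabilityMeasure (twoPoint v) := by
  constructor
  rw [twoPoint, Measure.add_apply, Measure.smul_apply, Measure.smul_apply, measure_univ,
    measure_univ, smul_eq_mul, smul_eq_mul, mul_one, mul_one,
    ← ENNReal.ofReal_add (by positivity) (by positivity), ← ENNReal.ofReal_one]
  congr 1
  field_simp
  ring

lemma twoPoint_mem_stdMeasures {v : ℝ} (hv : 0 < v) : twoPoint v ∈ stdMeasures := by
  refine ⟨inferInstance, ?_, ?_⟩ <;> rw [integral_twoPoint] <;> field_simp
  ring

lemma stopLoss_twoPoint (v x : ℝ) : stopLoss (twoPoint v) x =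
    v ^ 2 / (1 + v ^ 2) * max (-v⁻¹ - x) 0 + 1 / (1 + v ^ 2) * max (v - x) 0 := by
  rw [stopLoss_eq_integral_max_sub, integral_twoPoint]

lemma stopLoss_twoPoint_add_sqrt (x : ℝ) :
    stopLoss (twoPoint (x + √(x ^ 2 + 1))) x = (√(x ^ 2 + 1) - x) / 2 := by
  set s := √(x ^ 2 + 1)
  have hs2 : s ^ 2 = x ^ 2 + 1 := Real.sq_sqrt (by positivity)
  have hs : 0 < s := by positivity
  have hv : 0 < x + s := add_sqrt_sq_add_one_pos x
  have hinv : -(x + s)⁻¹ = x - s := by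
    field_simp
    linear_combination hs2
  rw [stopLoss_twoPoint, hinv, max_eq_right (by linarith), max_eq_left (by linarith)]
  field_simp
  linear_combination -(x + s) * hs2

lemma stopLoss_twoPoint_neg_inv {x : ℝ} (hx : x < 0) : stopLoss (twoPoint (-x⁻¹)) x = -x := by
  rw [stopLoss_twoPoint, inv_neg, inv_inv, neg_neg, sub_self, max_self,
    max_eq_left (by have := inv_lt_zero.2 hx; linarith)]
  have := hx.ne
  field_simp
  ring

lemma stopLoss_twoPoint_le_inv {v x : ℝ} (hv : 0 < v) (hx : 0 ≤ x) (hxv : x ≤ v) :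
    stopLoss (twoPoint v) x ≤ v⁻¹ := by
  rw [stopLoss_twoPoint, max_eq_right (by have := inv_pos.2 hv; linarith),
    max_eq_left (by linarith), mul_zero, zero_add, div_mul_eq_mul_div, one_mul,
    div_le_iff₀ (by positivity)]
  field_simp
  nlinarith

lemma isGreatest_stopLoss_image (x : ℝ) :
    IsGreatest ((stopLoss · x) '' stdMeasures) ((√(x ^ 2 + 1) - x) / 2) :=
  ⟨⟨_, twoPoint_mem_stdMeasures (add_sqrt_sq_add_one_pos x), stopLoss_twoPoint_add_sqrt x⟩,
    by rintro _ ⟨μ, hμ, rfl⟩; exact stopLoss_le_of_mem_stdMeasures hμ x⟩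

lemma isGLB_stopLoss_image (x : ℝ) : IsGLB ((stopLoss · x) '' stdMeasures) (max (-x) 0) := by
  refine ⟨by rintro _ ⟨μ, hμ, rfl⟩; exact max_neg_zero_le_stopLoss hμ x, fun b hb => ?_⟩
  have hb_le : ∀ {v}, 0 < v → b ≤ stopLoss (twoPoint v) x := fun hv =>
    hb ⟨_, twoPoint_mem_stdMeasures hv, rfl⟩
  rcases lt_or_ge x 0 with hx | hx
  · rw [max_eq_left (by linarith), ← stopLoss_twoPoint_neg_inv hx]
    exact hb_le (neg_pos.2 (inv_lt_zero.2 hx))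
  · rw [max_eq_right (by linarith)]
    refine le_of_forall_pos_le_add fun ε hε => ?_
    have hv : 0 < max x ε⁻¹ := lt_max_of_lt_right (inv_pos.2 hε)
    calc b ≤ stopLoss (twoPoint (max x ε⁻¹)) x := hb_le hv
      _ ≤ (max x ε⁻¹)⁻¹ := stopLoss_twoPoint_le_inv hv hx (le_max_left _ _)
      _ ≤ 0 + ε := by rw [zero_add]; exact inv_le_of_inv_le₀ hε (le_max_right _ _)

/-- Extremal stop-loss transforms over the class of standard probability
measures: `sup_μ Π_μ(x) = (√(x²+1) − x)/2` and `inf_μ Π_μ(x) = max(−x, 0)`. -/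
theorem extremal_stop_loss_transforms (x : ℝ) :
    sSup ((fun μ : Measure ℝ => stopLoss μ x) '' stdMeasures) =
      (Real.sqrt (x ^ 2 + 1) - x) / 2 ∧
    sInf ((fun μ : Measure ℝ => stopLoss μ x) '' stdMeasures) =
      max (-x) 0 :=
  ⟨(isGreatest_stopLoss_image x).csSup_eq,
    (isGLB_stopLoss_image x).csInf_eq (isGreatest_stopLoss_image x).nonempty⟩
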